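/- Let F be an algebraically closed field of characteristic 2 and let f = x_1^2 x_3 + x_1 x_2 x_4 + x_2^3 + x_4^2 ∈ F[x_1,x_2,x_3,x_4]. Then the singular locus of the hypersurface {f = 0} in affine 4-space over F, i.e. the set of points e ∈ F^4 with f(e) = 0 and all four partial derivatives of f vanishing at e, is exactly {(0,0,a,0) : a ∈ F}; in particular the singular locus of the quotient variety V_3/C_4 is isomorphic to the affine line A^1_F. -/

import Mathlib

open MvPolynomial

set_option synthInstance.maxHeartbeats 1000000
set_option maxHeartbeats 1000000

noncomputable section

variable (F : Type) [Field F]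

/-- The invariant ring (fixed subalgebra) of the algebra endomorphism `σ`;
for `σ` the action of a generator of a finite cyclic group, this is the
ring of invariants of that group. -/
def inva {n : ℕ} (σ : MvPolynomial (Fin n) F →ₐ[F] MvPolynomial (Fin n) F) :
    Subalgebra F (MvPolynomial (Fin n) F) :=
  AlgHom.equalizer σ (AlgHom.id F _)

/-- The linear substitution action of a matrix on the polynomial ring. -/
def matAct {n : ℕ} (M : Matrix (Fin n) (Fin n) F) :
    MvPolynomial (Fin n) F →ₐ[F] MvPolynomial (Fin n) F :=
  aeval fun i => ∑ j, C (M i j) * X j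

/-- The irrelevant (maximal graded) ideal of a graded subalgebra of a
polynomial ring: elements with vanishing constant term. -/
def mmax {n : ℕ} (A : Subalgebra F (MvPolynomial (Fin n) F)) : Ideal A :=
  RingHom.ker ((constantCoeff : MvPolynomial (Fin n) F →+* F).comp A.val.toRingHom)

/-- A graded subalgebra of a polynomial ring is Cohen-Macaulay iff there
is a regular sequence in the irrelevant maximal ideal whose length is the
Krull dimension (i.e. depth = dimension). -/
def IsCM {n : ℕ} (A : Subalgebra F (MvPolynomial (Fin n) F)) : Prop :=
  ∃ rs : List A, (∀ r ∈ rs, r ∈ mmax F A) ∧ RingTheory.Sequence.IsRegular (↥A) rs ∧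
    (rs.length : WithBot ℕ∞) = ringKrullDim ↥A

/-- Gorenstein: Cohen-Macaulay, with one-dimensional socle modulo a maximal
regular sequence (a homogeneous system of parameters). -/
def IsGor {n : ℕ} (A : Subalgebra F (MvPolynomial (Fin n) F)) : Prop :=
  ∃ rs : List A, (∀ r ∈ rs, r ∈ mmax F A) ∧ RingTheory.Sequence.IsRegular (↥A) rs ∧
    (rs.length : WithBot ℕ∞) = ringKrullDim ↥A ∧
    Module.finrank F (Submodule.restrictScalars F
      ((⊥ : Ideal (↥A ⧸ Ideal.span {x : ↥A | x ∈ rs})).colon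
        ((mmax F A).map (Ideal.Quotient.mk (Ideal.span {x : ↥A | x ∈ rs}))))) = 1

/-- A commutative `F`-algebra is a hypersurface if it is isomorphic to a
polynomial ring modulo a single principal ideal. -/
def IsHypersurface (A : Type) [CommRing A] [Algebra F A] : Prop :=
  ∃ (m : ℕ) (f : MvPolynomial (Fin m) F),
    Nonempty (A ≃ₐ[F] (MvPolynomial (Fin m) F ⧸ Ideal.span {f}))

/-- Similarity (conjugacy) of square matrices, i.e. isomorphism of the
corresponding representations. -/
def MatSimilar {n : ℕ} (M N : Matrix (Fin n) (Fin n) F) : Prop :=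
  ∃ P : (Matrix (Fin n) (Fin n) F)ˣ,
    (P : Matrix (Fin n) (Fin n) F) * M * ((P⁻¹ : (Matrix (Fin n) (Fin n) F)ˣ) :
      Matrix (Fin n) (Fin n) F) = N

/-- The representation given by `M` has a direct summand isomorphic to the
one-dimensional trivial representation. -/
def HasTrivialSummand {n : ℕ} (M : Matrix (Fin n) (Fin n) F) : Prop :=
  ∃ v : Fin n → F, v ≠ 0 ∧ M.mulVec v = v ∧
    ∃ Uc : Submodule F (Fin n → F), IsCompl (Submodule.span F {v}) Uc ∧
      ∀ u ∈ Uc, M.mulVec u ∈ Uc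

/-- A representation is reduced if no indecomposable direct summand is the
one-dimensional trivial representation. -/
def Reduced {n : ℕ} (M : Matrix (Fin n) (Fin n) F) : Prop :=
  ¬ HasTrivialSummand F M

/-- Matrix consisting of Jordan-like blocks: diagonal entries given by `d`,
with subdiagonal entries `1` exactly at the columns in `ones`. -/
def jmat (n : ℕ) (d : ℕ → F) (ones : Finset ℕ) : Matrix (Fin n) (Fin n) F :=
  fun i j => if (i : ℕ) = j then d i else
    if (i : ℕ) = (j : ℕ) + 1 ∧ (j : ℕ) ∈ ones then 1 else 0


/-- The defining equation of the hypersurface `V₃/C₄` in `𝔸⁴`. -/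
def fV3 : MvPolynomial (Fin 4) F :=
  X 0 ^ 2 * X 2 + X 0 * X 1 * X 3 + X 1 ^ 3 + X 3 ^ 2

def singularLocus {σ R : Type*} [CommRing R] (f : MvPolynomial σ R) : Set (σ → R) :=
  {e | eval e f = 0 ∧ ∀ i, eval e (pderiv i f) = 0}

theorem pderiv_two_fV3 : pderiv 2 (fV3 F) = X 0 ^ 2 := by
  simp [fV3, pderiv_X]

section CharTwo

variable [CharP F 2]

theorem pderiv_zero_fV3 : pderiv 0 (fV3 F) = X 1 * X 3 := by
  have h2 : (2 : MvPolynomial (Fin 4) F) = 0 := CharTwo.two_eq_zero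
  simp [fV3, pderiv_X, h2, mul_comm]

theorem pderiv_one_fV3 : pderiv 1 (fV3 F) = X 0 * X 3 + X 1 ^ 2 := by
  have h2 : (2 : MvPolynomial (Fin 4) F) = 0 := CharTwo.two_eq_zero
  simp [fV3, pderiv_X]
  linear_combination X 1 ^ 2 * h2

theorem pderiv_three_fV3 : pderiv 3 (fV3 F) = X 0 * X 1 := by
  have h2 : (2 : MvPolynomial (Fin 4) F) = 0 := CharTwo.two_eq_zero
  simp [fV3, pderiv_X, h2]

theorem singularLocus_fV3 : singularLocus (fV3 F) = {e | ∃ a, e = ![0, 0, a, 0]} := by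
  ext e
  constructor
  · rintro ⟨hf, hd⟩
    have h0 : e 0 = 0 := by simpa [pderiv_two_fV3] using hd 2
    have h1 : e 1 = 0 := by simpa [pderiv_one_fV3, h0] using hd 1
    have h3 : e 3 = 0 := by simpa [fV3, h0, h1] using hf
    exact ⟨e 2, by ext i; fin_cases i <;> simp [h0, h1, h3]⟩
  · rintro ⟨a, rfl⟩
    refine ⟨by simp [fV3], fun i => ?_⟩
    fin_cases i <;>
      simp [pderiv_zero_fV3, pderiv_one_fV3, pderiv_two_fV3, pderiv_three_fV3]

end CharTwo

theorem stmt3 [CharP F 2] :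
    {e : Fin 4 → F | eval e (fV3 F) = 0 ∧ ∀ i, eval e (pderiv i (fV3 F)) = 0} =
      {e : Fin 4 → F | ∃ a : F, e = ![0, 0, a, 0]} ∧
    Nonempty
      ({e : Fin 4 → F | eval e (fV3 F) = 0 ∧ ∀ i, eval e (pderiv i (fV3 F)) = 0} ≃ F) := by
  have hsing := singularLocus_fV3 F
  have hrange : {e : Fin 4 → F | ∃ a : F, e = ![0, 0, a, 0]} =
      Set.range fun a : F => ![0, 0, a, 0] :=
    Set.ext fun _ => exists_congr fun _ => eq_comm
  have hinj : Function.Injective fun a : F => ![0, 0, a, 0] := fun a b hab => congrFun hab 2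
  exact ⟨hsing, ⟨(Equiv.setCongr (hsing.trans hrange)).trans (Equiv.ofInjective _ hinj).symm⟩⟩

end
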